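/- Let n ≥ 1 and λ ≥ 2 be integers, let h : ℤⁿ → ℝ be finitely supported, let ν ∈ ℤⁿ, and let x : ℤⁿ → ℂ be finitely supported. Set h̃(k) = h(−k), let c = (h̃ ⋆ x)↓ (so c(m) = Σ_{j∈ℤⁿ} h(j − λm) x(j)), and define the filter g_ν(j) = Σ_{m∈ℤⁿ} h(λm − ν) h̃(j − λm) = Σ_{m∈ℤⁿ} h(λm − ν) h(λm − j). Then for every k ∈ ℤⁿ: (g_ν ⋆ x)(λk) = (h ⋆ (c↑))(λk − ν). Consequently, the detail coefficients d(k) := x(λk − ν) − (h ⋆ (((h̃ ⋆ x)↓)↑))(λk − ν) of the filter with coefficients δ̃_ν − g_ν are obtained by the Laplacian-pyramid step: d = (x − h ⋆ (c↑))(λ·−ν). -/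

import Mathlib

open Complex Real Function BigOperators

noncomputable section

open scoped Classical

/-- Convolution of sequences on `ℤⁿ`: `(a ⋆ y)(k) = Σ_j a(j) y(k - j)`. -/
def conv {n : ℕ} (a y : (Fin n → ℤ) → ℂ) : (Fin n → ℤ) → ℂ :=
  fun k => ∑ᶠ j : Fin n → ℤ, a j * y (k - j)

/-- Downsampling by `λ`: `y↓(k) = y(λk)`. -/
def down (n lam : ℕ) (y : (Fin n → ℤ) → ℂ) : (Fin n → ℤ) → ℂ :=
  fun k => y (fun i => (lam : ℤ) * k i)

/-- Upsampling by `λ`: `y↑(k) = y(k/λ)` if `k ∈ λℤⁿ`, `0` otherwise. -/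
def up (n lam : ℕ) (y : (Fin n → ℤ) → ℂ) : (Fin n → ℤ) → ℂ :=
  fun k => if ∀ i, (lam : ℤ) ∣ k i then y (fun i => k i / (lam : ℤ)) else 0

lemma finsum_comp_inj {α β M : Type*} [AddCommMonoid M] {e : α → β}
    (he : Function.Injective e) (F : β → M) (hF : Function.support F ⊆ Set.range e) :
    ∑ᶠ j, F j = ∑ᶠ m, F (e m) := by
  rw [← finsum_mem_range he, finsum_mem_def, Set.indicator_eq_self.2 hF]

lemma finsum_swap' {α β M : Type*} [AddCommMonoid M] (f : α → β → M)
    {s : Set α} {t : Set β} (hs : s.Finite) (ht : t.Finite)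
    (hsup : ∀ i j, f i j ≠ 0 → i ∈ s ∧ j ∈ t) :
    ∑ᶠ i, ∑ᶠ j, f i j = ∑ᶠ j, ∑ᶠ i, f i j := by
  have h1 : ∀ i, ∑ᶠ j, f i j = ∑ᶠ j ∈ t, f i j := fun i => by
    rw [finsum_mem_def, Set.indicator_eq_self.2 (fun j hj => (hsup i j hj).2)]
  have h2 : ∀ j, ∑ᶠ i, f i j = ∑ᶠ i ∈ s, f i j := fun j => by
    rw [finsum_mem_def, Set.indicator_eq_self.2 (fun i hi => (hsup i j hi).1)]
  calc ∑ᶠ i, ∑ᶠ j, f i j = ∑ᶠ i, ∑ᶠ j ∈ t, f i j := by simp_rw [h1]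
    _ = ∑ᶠ i ∈ s, ∑ᶠ j ∈ t, f i j := by
        rw [finsum_mem_def, Set.indicator_eq_self.2 ?_]
        intro i hi
        by_contra hiS
        exact hi (finsum_mem_of_eqOn_zero (fun j _ => by
          by_contra hfij; exact hiS ((hsup i j hfij).1)))
    _ = ∑ᶠ j ∈ t, ∑ᶠ i ∈ s, f i j := finsum_mem_comm f hs ht
    _ = ∑ᶠ j ∈ t, ∑ᶠ i, f i j := by
        apply finsum_mem_congr rfl; intro j _; exact (h2 j).symm
    _ = ∑ᶠ j, ∑ᶠ i, f i j := by
        rw [finsum_mem_def, Set.indicator_eq_self.2 ?_]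
        intro j hj
        by_contra hjT
        apply hj
        show ∑ᶠ i, f i j = 0
        rw [h2 j]
        exact finsum_mem_of_eqOn_zero (fun i _ => by
          by_contra hfij; exact hjT ((hsup i j hfij).2))

theorem laplacian_pyramid_step (n lam : ℕ) (hn : 1 ≤ n) (hlam : 2 ≤ lam)
    (h : (Fin n → ℤ) → ℝ) (hfin : (Function.support h).Finite)
    (ν : Fin n → ℤ)
    (x : (Fin n → ℤ) → ℂ) (hx : (Function.support x).Finite)
    (c : (Fin n → ℤ) → ℂ)
    (hc : c = down n lam (conv (fun j => (h (-j) : ℂ)) x))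
    (g : (Fin n → ℤ) → ℂ)
    (hg : g = fun j => ∑ᶠ m : Fin n → ℤ,
      ((h (fun i => (lam : ℤ) * m i - ν i) * h (fun i => (lam : ℤ) * m i - j i) : ℝ) : ℂ))
    (d : (Fin n → ℤ) → ℂ)
    (hd : d = fun k =>
      x (fun i => (lam : ℤ) * k i - ν i)
        - conv (fun j => (h j : ℂ)) (up n lam (down n lam (conv (fun j => (h (-j) : ℂ)) x)))
            (fun i => (lam : ℤ) * k i - ν i)) :
    (∀ k : Fin n → ℤ,
      conv g x (fun i => (lam : ℤ) * k i)
        = conv (fun j => (h j : ℂ)) (up n lam c) (fun i => (lam : ℤ) * k i - ν i)) ∧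
    (∀ k : Fin n → ℤ,
      d k = x (fun i => (lam : ℤ) * k i - ν i)
        - conv (fun j => (h j : ℂ)) (up n lam c) (fun i => (lam : ℤ) * k i - ν i)) := by
  have hlam0 : ((lam : ℤ)) ≠ 0 := by positivity
  set L : (Fin n → ℤ) → (Fin n → ℤ) := fun m => fun i => (lam : ℤ) * m i with hL
  have hLadd : ∀ a b, L (a - b) = L a - L b := by
    intro a b; funext i; simp [hL, mul_sub]
  have hLinj : Function.Injective L := by
    intro a b hab
    funext i
    have := congrFun hab i
    exact mul_left_cancel₀ hlam0 this
  -- value of c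
  have hcval : ∀ m, c m = ∑ᶠ j, (h (j - L m) : ℂ) * x j := by
    intro m
    have hcm : c m = ∑ᶠ j, (h (-j) : ℂ) * x (L m - j) := by rw [hc]; rfl
    rw [hcm]
    have hb : Function.Bijective (fun j => L m - j : (Fin n → ℤ) → (Fin n → ℤ)) := by
      constructor
      · intro a b hab; have := sub_right_injective hab; exact this
      · intro b; exact ⟨L m - b, by simp⟩
    rw [← finsum_comp (fun j => L m - j) hb (g := fun j => (h (j - L m) : ℂ) * x j)]
    apply finsum_congr; intro j
    simp [sub_sub_cancel]
  -- RHS computation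
  have hRHS : ∀ p : Fin n → ℤ,
      conv (fun j => (h j : ℂ)) (up n lam c) p = ∑ᶠ m, (h (p - L m) : ℂ) * c m := by
    intro p
    have hinj : Function.Injective (fun m => p - L m : (Fin n → ℤ) → (Fin n → ℤ)) := by
      intro a b hab
      exact hLinj (by have := sub_right_injective hab; exact this)
    have hsupp : Function.support (fun j => (h j : ℂ) * up n lam c (p - j))
        ⊆ Set.range (fun m => p - L m) := by
      intro j hj
      have hup : up n lam c (p - j) ≠ 0 := by
        intro h0; apply hj; simp [h0]
      have hdvd : ∀ i, (lam : ℤ) ∣ (p - j) i := by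
        by_contra hnd
        exact hup (by rw [up, if_neg hnd])
      refine ⟨fun i => (p i - j i) / (lam : ℤ), ?_⟩
      funext i
      have : (lam : ℤ) * ((p i - j i) / (lam : ℤ)) = p i - j i :=
        Int.mul_ediv_cancel' (hdvd i)
      simp only [hL, Pi.sub_apply]
      omega
    show (∑ᶠ j, (h j : ℂ) * up n lam c (p - j)) = _
    rw [finsum_comp_inj hinj _ hsupp]
    apply finsum_congr; intro m
    have h1 : p - (p - L m) = L m := sub_sub_cancel _ _
    rw [h1]
    congr 1
    rw [up, if_pos (fun i => ⟨m i, rfl⟩)]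
    congr 1
    funext i
    exact Int.mul_ediv_cancel_left _ hlam0
  constructor
  · intro k
    set p : Fin n → ℤ := (fun i => (lam : ℤ) * k i) - ν with hp
    have hpk : (fun i => (lam : ℤ) * k i - ν i) = p := by funext i; simp [hp, hL]
    have hLk : (fun i => (lam : ℤ) * k i) = L k := rfl
    -- LHS
    have hb1 : Function.Bijective (fun j => L k - j : (Fin n → ℤ) → (Fin n → ℤ)) := by
      constructor
      · intro a b hab; exact sub_right_injective hab
      · intro b; exact ⟨L k - b, by simp⟩
    have hinjp : Function.Injective (fun m : Fin n → ℤ => p - L m) :=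
      fun a b hab => hLinj (sub_right_injective hab)
    have hfinpre : ((fun m : Fin n → ℤ => p - L m) ⁻¹' Function.support h).Finite :=
      hfin.preimage hinjp.injOn
    have hgval : ∀ j, g (L k - j) = ∑ᶠ m, ((h (p - L m) * h (j - L m) : ℝ) : ℂ) := by
      intro j
      rw [hg]
      beta_reduce
      have hb2 : Function.Bijective (fun m => k - m : (Fin n → ℤ) → (Fin n → ℤ)) := by
        constructor
        · intro a b hab; exact sub_right_injective hab
        · intro b; exact ⟨k - b, by simp⟩
      rw [← finsum_comp (fun m => k - m) hb2
        (g := fun m => ((h (fun i => (lam : ℤ) * m i - ν i)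
          * h (fun i => (lam : ℤ) * m i - (L k - j) i) : ℝ) : ℂ))]
      apply finsum_congr; intro m
      have e1 : (fun i => (lam : ℤ) * (k - m) i - ν i) = p - L m := by
        funext i; simp only [hp, hL, Pi.sub_apply]; ring
      have e2 : (fun i => (lam : ℤ) * (k - m) i - (L k - j) i) = j - L m := by
        funext i; simp only [hL, Pi.sub_apply]; ring
      rw [e1, e2]
    calc conv g x (fun i => (lam : ℤ) * k i)
        = ∑ᶠ j, g (L k - j) * x j := by
          show (∑ᶠ j, g j * x (L k - j)) = _
          rw [← finsum_comp (fun j => L k - j) hb1 (g := fun j => g (L k - j) * x j)]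
          apply finsum_congr; intro j
          simp [sub_sub_cancel]
      _ = ∑ᶠ j, ∑ᶠ m, ((h (p - L m) : ℂ) * (h (j - L m) : ℂ)) * x j := by
          apply finsum_congr; intro j
          rw [hgval j]
          push_cast
          rw [finsum_mul]
      _ = ∑ᶠ m, ∑ᶠ j, ((h (p - L m) : ℂ) * (h (j - L m) : ℂ)) * x j := by
          refine (finsum_swap' (fun m j => ((h (p - L m) : ℂ) * (h (j - L m) : ℂ)) * x j)
            hfinpre hx ?_).symm
          intro m j hmj
          constructor
          · simp only [Set.mem_preimage, Function.mem_support, ne_eq]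
            intro h0
            exact hmj (by simp [h0])
          · simp only [Function.mem_support, ne_eq]
            intro h0
            exact hmj (by simp [h0])
      _ = ∑ᶠ m, (h (p - L m) : ℂ) * c m := by
          apply finsum_congr; intro m
          rw [hcval m, mul_finsum]
          · apply finsum_congr; intro j; ring
      _ = conv (fun j => (h j : ℂ)) (up n lam c) (fun i => (lam : ℤ) * k i - ν i) := by
          rw [hpk, hRHS p]
  · intro k
    rw [hd, hc]
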